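/- Let u ∈ ℤ[X] be locally nilpotent at 1 and suppose u(1) = 2, u(2) = 3, and u(3) = 4. Then u(n) = n + 1 for every integer n ≥ 1; in particular, u(X) = X + 1 whenever u has degree 1 and, for any degree, u^{(n)}(1) ≠ 0 for all n ≥ 1. -/

import Mathlib

open Polynomial

/-- The `n`-th compositional iterate of the polynomial `u`, evaluated at `r`. -/
def iterEval (u : Polynomial ℤ) (n : ℕ) (r : ℤ) : ℤ :=
  (fun x => Polynomial.eval x u)^[n] r

/-- `u` is weakly locally nilpotent at `r` outside `A`: for every prime `p ∉ A`
there is `m ≥ 1` with `p ∣ u^{(m)}(r)`. -/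
def WeaklyLocallyNilpotentAt (u : Polynomial ℤ) (r : ℤ) (A : Set ℕ) : Prop :=
  ∀ p : ℕ, Nat.Prime p → p ∉ A → ∃ m : ℕ, 1 ≤ m ∧ (p : ℤ) ∣ iterEval u m r

/-- `u` is locally nilpotent at `r`: for every prime `p` there is `m ≥ 1`
with `p ∣ u^{(m)}(r)`. -/
def LocallyNilpotentAt (u : Polynomial ℤ) (r : ℤ) : Prop :=
  ∀ p : ℕ, Nat.Prime p → ∃ m : ℕ, 1 ≤ m ∧ (p : ℤ) ∣ iterEval u m r

/-- `u` is nilpotent at `r`: some iterate `u^{(n)}(r)` (with `n ≥ 1`) equals `0`. -/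
def IsNilpotentAt (u : Polynomial ℤ) (r : ℤ) : Prop :=
  ∃ n : ℕ, 1 ≤ n ∧ iterEval u n r = 0

/-- `u` is nilpotent at `r` with nilpotency index exactly `i`. -/
def NilpotentOfIndex (u : Polynomial ℤ) (r : ℤ) (i : ℕ) : Prop :=
  1 ≤ i ∧ iterEval u i r = 0 ∧ ∀ m : ℕ, 1 ≤ m → m < i → iterEval u m r ≠ 0

/-!
Write `aₙ = u^{(n)}(1)`, so `a₀ = 1`. Since `x - y ∣ u(x) - u(y)`, every difference `a_s - a_t`
divides `a_{s+j} - a_{t+j}`; in particular a prime dividing `a_M - a_i` (`i < M`) sees the sequence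
periodic from `i` on, and local nilpotency then makes it divide some `a_k` with `k < M`.
Suppose `a_j = j + 1` for `j ≤ m`, `m ≥ 3`, and put `A = a_{m+1}`. Then `j ∣ A - (m + 2)` for
`1 ≤ j ≤ m`, while every prime factor of `A - a_m` and of `A - a_0` divides some `k + 1 ≤ m + 1`.
These constraints leave only `A = m + 2`, which is the induction step. Finally `u` agrees with
`X + 1` at infinitely many points, so `u = X + 1`.
-/

lemma iterEval_zero (u : ℤ[X]) (r : ℤ) : iterEval u 0 r = r := rfl

lemma iterEval_succ (u : ℤ[X]) (n : ℕ) (r : ℤ) :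
    iterEval u (n + 1) r = u.eval (iterEval u n r) :=
  Function.iterate_succ_apply' _ n r

lemma sub_dvd_iterEval_add_sub (u : ℤ[X]) (r : ℤ) (s t j : ℕ) :
    iterEval u s r - iterEval u t r ∣ iterEval u (s + j) r - iterEval u (t + j) r := by
  induction j with
  | zero => rfl
  | succ j ih =>
    rw [← add_assoc, ← add_assoc, iterEval_succ, iterEval_succ]
    exact ih.trans (sub_dvd_eval_sub _ _ u)

/-- If `d ∣ a_M - a_i` with `i < M`, then `d ∣ a_t` forces `d ∣ a_{t - (M - i)}` for `t ≥ M`. -/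
lemma exists_lt_dvd_iterEval_of_dvd_sub {u : ℤ[X]} {r d : ℤ} {i M : ℕ} (hiM : i < M)
    (hd : d ∣ iterEval u M r - iterEval u i r) (t : ℕ) (ht : d ∣ iterEval u t r) :
    ∃ k < M, d ∣ iterEval u k r := by
  induction t using Nat.strong_induction_on with
  | _ t ih =>
    by_cases htM : t < M
    · exact ⟨t, htM, ht⟩
    have hshift := sub_dvd_iterEval_add_sub u r M i (t - M)
    rw [Nat.add_sub_cancel' (not_lt.1 htM), show i + (t - M) = t - (M - i) by omega] at hshift
    refine ih (t - (M - i)) (by omega) ?_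
    simpa using dvd_sub ht (hd.trans hshift)

lemma LocallyNilpotentAt.exists_lt_dvd_iterEval {u : ℤ[X]} {r : ℤ} (h : LocallyNilpotentAt u r)
    {q : ℕ} (hq : q.Prime) {i M : ℕ} (hiM : i < M)
    (hd : (q : ℤ) ∣ iterEval u M r - iterEval u i r) :
    ∃ k < M, (q : ℤ) ∣ iterEval u k r := by
  obtain ⟨t, -, ht⟩ := h q hq
  exact exists_lt_dvd_iterEval_of_dvd_sub hiM hd t ht

lemma Int.exists_prime_natCast_dvd {x : ℤ} (hx : x.natAbs ≠ 1) :
    ∃ q : ℕ, q.Prime ∧ (q : ℤ) ∣ x := by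
  obtain ⟨q, hq, hqx⟩ := Nat.exists_prime_and_dvd hx
  exact ⟨q, hq, Int.natCast_dvd.2 hqx⟩

lemma eq_add_two_of_dvd_of_prime_factors_le {m : ℕ} (hm : 3 ≤ m) {A : ℤ}
    (hdvd : ∀ j : ℕ, 1 ≤ j → j ≤ m → (j : ℤ) ∣ A - (m + 2))
    (hpred : ∀ q : ℕ, q.Prime → (q : ℤ) ∣ A - (m + 1) → q ≤ m + 1)
    (hone : ∀ q : ℕ, q.Prime → (q : ℤ) ∣ A - 1 → q ≤ m + 1) :
    A = m + 2 := by
  have hsmall : ∀ q : ℕ, q.Prime → q ≤ m → ¬ (q : ℤ) ∣ A - (m + 1) := by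
    intro q hq hqm hqc
    have h1 : (q : ℤ) ∣ 1 := by simpa using dvd_sub hqc (hdvd q hq.one_le hqm)
    exact hq.one_lt.ne' (by exact_mod_cast Int.eq_one_of_dvd_one (by positivity) h1)
  by_cases hunit : (A - (m + 1)).natAbs = 1
  · have h3 := hdvd 3 (by norm_num) hm
    rcases Int.natAbs_eq_iff.1 hunit with h | h
    · push_cast at h; omega
    · push_cast at h; omega
  -- All prime factors of `A - (m + 1)` equal `m + 1`, so `m + 1` is a prime dividing `A`.
  obtain ⟨p, hp, hpA⟩ := Int.exists_prime_natCast_dvd hunit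
  obtain rfl : p = m + 1 := le_antisymm (hpred p hp hpA) (not_le.1 fun h => hsmall p hp h hpA)
  have hmA : ((m + 1 : ℕ) : ℤ) ∣ A := by simpa using dvd_add hpA (dvd_refl ((m + 1 : ℕ) : ℤ))
  have hA1 : (A - 1).natAbs = 1 := by
    by_contra hne
    obtain ⟨q, hq, hqA⟩ := Int.exists_prime_natCast_dvd hne
    rcases (hone q hq hqA).lt_or_eq with hlt | rfl
    · have hq' := dvd_sub hqA (hdvd q hq.one_le (by omega))
      rw [show A - 1 - (A - (m + 2)) = ((m + 1 : ℕ) : ℤ) by push_cast; ring] at hq'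
      have := (Nat.prime_dvd_prime_iff_eq hq hp).1 (by exact_mod_cast hq')
      omega
    · have : ((m + 1 : ℕ) : ℤ) ∣ 1 := by simpa using dvd_sub hmA hqA
      have := Int.le_of_dvd one_pos this
      omega
  rcases Int.natAbs_eq_iff.1 hA1 with h | h
  · rw [show A = 2 by omega] at hmA
    have := Int.le_of_dvd (by norm_num) hmA
    omega
  · have : (m : ℤ) ∣ 2 := by
      have := hdvd m (by omega) le_rfl
      rw [show A = 0 by omega] at this
      simpa using dvd_add this (dvd_refl (m : ℤ))
    have := Int.le_of_dvd (by norm_num) this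
    omega

lemma iterEval_one_succ_of_forall_le {u : ℤ[X]} (h : LocallyNilpotentAt u 1) {m : ℕ}
    (hm : 3 ≤ m) (ih : ∀ j ≤ m, iterEval u j 1 = j + 1) :
    iterEval u (m + 1) 1 = m + 2 := by
  have hdvd : ∀ j : ℕ, 1 ≤ j → j ≤ m → (j : ℤ) ∣ iterEval u (m + 1) 1 - (m + 2) := by
    intro j hj hjm
    have hshift := sub_dvd_iterEval_add_sub u 1 m (m - j) 1
    rw [ih m le_rfl, ih (m - j) (by omega), ih (m - j + 1) (by omega)] at hshift
    push_cast [Nat.cast_sub hjm] at hshift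
    rw [show (m : ℤ) + 1 - (m - j + 1) = j by ring] at hshift
    rw [show iterEval u (m + 1) 1 - (m + 2) = iterEval u (m + 1) 1 - (m - j + 1 + 1) - j by ring]
    exact dvd_sub hshift dvd_rfl
  have hfactor : ∀ i ≤ m, ∀ q : ℕ, q.Prime →
      (q : ℤ) ∣ iterEval u (m + 1) 1 - iterEval u i 1 → q ≤ m + 1 := by
    intro i hi q hq hqd
    obtain ⟨k, hk, hqk⟩ := h.exists_lt_dvd_iterEval hq (Nat.lt_succ_of_le hi) hqd
    rw [ih k (by omega)] at hqk
    have := Nat.le_of_dvd k.succ_pos (by exact_mod_cast hqk)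
    omega
  refine eq_add_two_of_dvd_of_prime_factors_le hm hdvd ?_ ?_
  · simpa [ih m le_rfl] using hfactor m le_rfl
  · simpa [iterEval_zero] using hfactor 0 (Nat.zero_le m)

lemma iterEval_one_eq_of_initial_values {u : ℤ[X]} (h : LocallyNilpotentAt u 1)
    (h1 : u.eval 1 = 2) (h2 : u.eval 2 = 3) (h3 : u.eval 3 = 4) (n : ℕ) :
    iterEval u n 1 = n + 1 := by
  induction n using Nat.strong_induction_on with
  | _ n ih =>
    match n with
    | 0 => rfl
    | 1 => rw [iterEval_succ, iterEval_zero, h1]; norm_num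
    | 2 => rw [iterEval_succ, ih 1 (by omega)]; norm_num [h2]
    | 3 => rw [iterEval_succ, ih 2 (by omega)]; norm_num [h3]
    | m + 4 =>
      rw [iterEval_one_succ_of_forall_le h (by omega) fun j hj => ih j (by omega)]
      push_cast
      ring

theorem locally_nilpotent_at_one_with_initial_values (u : Polynomial ℤ)
    (h : LocallyNilpotentAt u 1)
    (h1 : u.eval 1 = 2) (h2 : u.eval 2 = 3) (h3 : u.eval 3 = 4) :
    (∀ n : ℤ, 1 ≤ n → u.eval n = n + 1) ∧
    (u.natDegree = 1 → u = X + 1) ∧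
    (∀ n : ℕ, 1 ≤ n → iterEval u n 1 ≠ 0) := by
  have hiter := iterEval_one_eq_of_initial_values h h1 h2 h3
  have heval : ∀ n : ℤ, 1 ≤ n → u.eval n = n + 1 := by
    intro n hn
    obtain ⟨t, rfl⟩ : ∃ t : ℕ, n = t + 1 := ⟨(n - 1).toNat, by omega⟩
    have hstep := iterEval_succ u t 1
    rw [hiter, hiter] at hstep
    push_cast at hstep
    linarith
  refine ⟨heval, fun _ => ?_, fun n _ => by rw [hiter n]; positivity⟩
  exact eq_of_infinite_eval_eq u (X + 1)
    ((Set.Ici_infinite (1 : ℤ)).mono fun n hn => by simp [heval n hn])
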